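/- Let L be a straight line in ℝ². For any p₁, p₂ ∈ L with p₁ ≠ p₂ and any p̃₁, p̃₂ ∈ L with p̃₁ ≠ p̃₂, there exists an affine transformation H : ℝ² → ℝ² (an invertible affine map) such that H ∘ D_p = D_{p̃}, where p = (p₁, p₂) and p̃ = (p̃₁, p̃₂). -/

import Mathlib

noncomputable section

abbrev E2 := EuclideanSpace ℝ (Fin 2)

/-- The distance-squared mapping `D_p : ℝ² → ℝ²` associated to `p = (p₁, p₂)`. -/
def Dp (p₁ p₂ : E2) (x : E2) : E2 :=
  (EuclideanSpace.equiv (Fin 2) ℝ).symm ![‖x - p₁‖ ^ 2, ‖x - p₂‖ ^ 2]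

/-!
Parametrise the line as `s ↦ a + s • v`. Then
`‖x - (a + s • v)‖² = ‖x - a‖² - 2 s ⟪x - a, v⟫ + s² ‖v‖²`,
so `D_p` with `p = (a + s₁ • v, a + s₂ • v)` is the map `x ↦ (‖x - a‖², ⟪x - a, v⟫)`, which does
not depend on `p`, followed by an affine map `G_p` of the plane whose linear part
`(u, w) ↦ (u - 2 s₁ w, u - 2 s₂ w)` has determinant `2 (s₁ - s₂) ≠ 0`. Hence `H = G_q ∘ G_p⁻¹`.
-/

theorem norm_sub_add_smul_sq {V : Type*} [NormedAddCommGroup V] [InnerProductSpace ℝ V]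
    (x a v : V) (s : ℝ) :
    ‖x - (a + s • v)‖ ^ 2 = ‖x - a‖ ^ 2 - 2 * s * inner ℝ (x - a) v + s ^ 2 * ‖v‖ ^ 2 := by
  rw [← sub_sub, norm_sub_sq_real, real_inner_smul_right, norm_smul, mul_pow, Real.norm_eq_abs,
    sq_abs]
  ring

def lineData {V : Type*} [NormedAddCommGroup V] [InnerProductSpace ℝ V] (a v x : V) : E2 :=
  !₂[‖x - a‖ ^ 2, inner ℝ (x - a) v]

def sqDistLinearMap (s₁ s₂ : ℝ) : E2 →ₗ[ℝ] E2 where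
  toFun y := !₂[y 0 - 2 * s₁ * y 1, y 0 - 2 * s₂ * y 1]
  map_add' y z := by ext i; fin_cases i <;> simp <;> ring
  map_smul' r y := by ext i; fin_cases i <;> simp <;> ring

theorem sqDistLinearMap_injective {s₁ s₂ : ℝ} (h : s₁ ≠ s₂) :
    Function.Injective (sqDistLinearMap s₁ s₂) := by
  rw [← LinearMap.ker_eq_bot, LinearMap.ker_eq_bot']
  intro y hy
  have h0 : y 0 - 2 * s₁ * y 1 = 0 := congrArg (· 0) hy
  have h1 : y 0 - 2 * s₂ * y 1 = 0 := congrArg (· 1) hy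
  have hy1 : y 1 = 0 := by
    have : 2 * (s₁ - s₂) * y 1 = 0 := by linear_combination h1 - h0
    simpa [sub_ne_zero.mpr h] using this
  have hy0 : y 0 = 0 := by simpa [hy1] using h0
  ext i; fin_cases i <;> simp [hy0, hy1]

def sqDistAffineEquiv (s₁ s₂ c : ℝ) (h : s₁ ≠ s₂) : E2 ≃ᵃ[ℝ] E2 :=
  (LinearEquiv.ofInjectiveEndo _ (sqDistLinearMap_injective h)).toAffineEquiv.trans
    (AffineEquiv.constVAdd ℝ E2 !₂[s₁ ^ 2 * c, s₂ ^ 2 * c])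

theorem Dp_add_smul_eq_sqDistAffineEquiv (a v x : E2) {s₁ s₂ : ℝ} (h : s₁ ≠ s₂) :
    Dp (a + s₁ • v) (a + s₂ • v) x = sqDistAffineEquiv s₁ s₂ (‖v‖ ^ 2) h (lineData a v x) := by
  ext i
  fin_cases i <;>
  · simp [Dp, sqDistAffineEquiv, sqDistLinearMap, lineData, norm_sub_add_smul_sq]
    ring

theorem stmt7_general (a v : E2)
    (L : Set E2) (hL : L = {x : E2 | ∃ s : ℝ, x = a + s • v})
    (p₁ p₂ q₁ q₂ : E2)
    (hp₁ : p₁ ∈ L) (hp₂ : p₂ ∈ L) (hq₁ : q₁ ∈ L) (hq₂ : q₂ ∈ L)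
    (hp : p₁ ≠ p₂) (hq : q₁ ≠ q₂) :
    ∃ H : E2 ≃ᵃ[ℝ] E2, ∀ x : E2, H (Dp p₁ p₂ x) = Dp q₁ q₂ x := by
  subst hL
  obtain ⟨s₁, rfl⟩ := hp₁
  obtain ⟨s₂, rfl⟩ := hp₂
  obtain ⟨t₁, rfl⟩ := hq₁
  obtain ⟨t₂, rfl⟩ := hq₂
  have hs : s₁ ≠ s₂ := by rintro rfl; exact hp rfl
  have ht : t₁ ≠ t₂ := by rintro rfl; exact hq rfl
  refine ⟨(sqDistAffineEquiv s₁ s₂ (‖v‖ ^ 2) hs).symm.trans (sqDistAffineEquiv t₁ t₂ (‖v‖ ^ 2) ht),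
    fun x ↦ ?_⟩
  rw [Dp_add_smul_eq_sqDistAffineEquiv a v x hs, Dp_add_smul_eq_sqDistAffineEquiv a v x ht,
    AffineEquiv.trans_apply, AffineEquiv.symm_apply_apply]

theorem stmt7 (a v : E2) (hv : v ≠ 0)
    (L : Set E2) (hL : L = {x : E2 | ∃ s : ℝ, x = a + s • v})
    (p₁ p₂ q₁ q₂ : E2)
    (hp₁ : p₁ ∈ L) (hp₂ : p₂ ∈ L) (hq₁ : q₁ ∈ L) (hq₂ : q₂ ∈ L)
    (hp : p₁ ≠ p₂) (hq : q₁ ≠ q₂) :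
    ∃ H : E2 ≃ᵃ[ℝ] E2, ∀ x : E2, H (Dp p₁ p₂ x) = Dp q₁ q₂ x :=
  stmt7_general a v L hL p₁ p₂ q₁ q₂ hp₁ hp₂ hq₁ hq₂ hp hq
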